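/- Let X and Y be independent Poisson random variables with parameters t/n and u/n respectively, where t ≥ n > 0 and u ≥ 0. Then P(X ≤ Y) ≤ exp(-t/n + 2tu/n²). -/

import Mathlib

/-!
Write `λ = t/n ≥ 1` and `μ = u/n`. Conditioning on `Y` gives
`P(X ≤ Y) ≤ ∑ₖ P(X ≤ k) P(Y = k)`. Since `λ ≥ 1`, the Poisson distribution function satisfies
`P(X ≤ k) = e^{-λ} ∑_{j ≤ k} λ^j / j! ≤ e^{-λ} (2λ)^k`, while summing `(2λ)^k` against the law of
`Y` evaluates its generating function at `2λ`, giving `e^{μ(2λ - 1)}`.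
Hence `P(X ≤ Y) ≤ e^{-λ - μ + 2λμ} ≤ e^{-λ + 2λμ}`.
-/

open MeasureTheory ProbabilityTheory Real
open scoped Nat

lemma sum_range_pow_div_factorial_le_two_mul_pow {x : ℝ} (hx : 1 ≤ x) (k : ℕ) :
    ∑ j ∈ Finset.range (k + 1), x ^ j / j ! ≤ (2 * x) ^ k := by
  induction k with
  | zero => simp
  | succ k ih =>
    have h_term : x ^ (k + 1) / (k + 1)! ≤ x ^ (k + 1) :=
      div_le_self (by positivity) (mod_cast Nat.one_le_iff_ne_zero.mpr (Nat.factorial_ne_zero _))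
    have h_pow : x ^ k ≤ (2 * x) ^ k := pow_le_pow_left₀ (by linarith) (by linarith) k
    have h_nonneg : 0 ≤ (2 * x) ^ k := by positivity
    calc ∑ j ∈ Finset.range (k + 2), x ^ j / j !
        = ∑ j ∈ Finset.range (k + 1), x ^ j / j ! + x ^ (k + 1) / (k + 1)! :=
          Finset.sum_range_succ _ _
      _ ≤ (2 * x) ^ k + x ^ k * x := by rw [← pow_succ]; linarith
      _ ≤ (2 * x) ^ (k + 1) := by rw [pow_succ]; nlinarith

lemma hasSum_pow_mul_poisson (c μ : ℝ) :
    HasSum (fun k : ℕ ↦ c ^ k * (exp (-μ) * μ ^ k / k !)) (exp (μ * (c - 1))) := by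
  have h := (NormedSpace.expSeries_div_hasSum_exp (c * μ)).mul_left (exp (-μ))
  rw [← Real.exp_eq_exp_ℝ] at h
  have h_terms : (fun k : ℕ ↦ c ^ k * (exp (-μ) * μ ^ k / k !))
      = fun k ↦ exp (-μ) * ((c * μ) ^ k / k !) := by
    ext k; rw [mul_pow]; ring
  rwa [h_terms, show μ * (c - 1) = -μ + c * μ by ring, exp_add]

lemma tsum_ofReal_pow_mul_poisson {c μ : ℝ} (hc : 0 ≤ c) (hμ : 0 ≤ μ) :
    ∑' k : ℕ, ENNReal.ofReal (c ^ k) * ENNReal.ofReal (exp (-μ) * μ ^ k / k !)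
      = ENNReal.ofReal (exp (μ * (c - 1))) := by
  simp_rw [← ENNReal.ofReal_mul (pow_nonneg hc _)]
  have h := hasSum_pow_mul_poisson c μ
  rw [← ENNReal.ofReal_tsum_of_nonneg (fun k ↦ by positivity) h.summable, h.tsum_eq]

lemma ProbabilityTheory.IndepFun.measure_setOf_le_le_tsum {Ω : Type*} [MeasurableSpace Ω]
    {P : Measure Ω} {X Y : Ω → ℕ} (hXY : IndepFun X Y P) :
    P {ω | X ω ≤ Y ω} ≤ ∑' k : ℕ, P {ω | X ω ≤ k} * P {ω | Y ω = k} := by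
  calc P {ω | X ω ≤ Y ω} ≤ P (⋃ k : ℕ, X ⁻¹' Set.Iic k ∩ Y ⁻¹' {k}) :=
        measure_mono fun ω h ↦ Set.mem_iUnion.mpr ⟨Y ω, h, rfl⟩
    _ ≤ ∑' k : ℕ, P (X ⁻¹' Set.Iic k ∩ Y ⁻¹' {k}) := measure_iUnion_le _
    _ = ∑' k : ℕ, P {ω | X ω ≤ k} * P {ω | Y ω = k} := by
        congr 1; ext k
        exact hXY.measure_inter_preimage_eq_mul _ _ measurableSet_Iic (measurableSet_singleton k)

lemma measure_setOf_le_le_of_poisson {Ω : Type*} [MeasurableSpace Ω] {P : Measure Ω}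
    {X : Ω → ℕ} {r : ℝ} (hr : 1 ≤ r)
    (hX : ∀ k : ℕ, P {ω | X ω = k} = ENNReal.ofReal (exp (-r) * r ^ k / k !)) (k : ℕ) :
    P {ω | X ω ≤ k} ≤ ENNReal.ofReal (exp (-r)) * ENNReal.ofReal ((2 * r) ^ k) := by
  calc P {ω | X ω ≤ k} ≤ P (⋃ j ∈ Finset.range (k + 1), {ω | X ω = j}) :=
        measure_mono fun ω h ↦ Set.mem_biUnion (Finset.mem_range.mpr (Nat.lt_succ_of_le h)) rfl
    _ ≤ ∑ j ∈ Finset.range (k + 1), P {ω | X ω = j} := measure_biUnion_finset_le _ _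
    _ = ENNReal.ofReal (exp (-r) * ∑ j ∈ Finset.range (k + 1), r ^ j / j !) := by
        rw [Finset.mul_sum, ENNReal.ofReal_sum_of_nonneg fun j _ ↦ by positivity]
        simp only [hX, mul_div_assoc]
    _ ≤ ENNReal.ofReal (exp (-r) * (2 * r) ^ k) := by
        gcongr; exact sum_range_pow_div_factorial_le_two_mul_pow hr k
    _ = ENNReal.ofReal (exp (-r)) * ENNReal.ofReal ((2 * r) ^ k) :=
        ENNReal.ofReal_mul (exp_nonneg _)

theorem poisson_le_poisson_bound_general
    {Ω : Type*} [MeasurableSpace Ω] (P : Measure Ω)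
    (t u n : ℝ) (hn : 0 < n) (ht : n ≤ t) (hu : 0 ≤ u)
    (X Y : Ω → ℕ)
    (hX : ∀ k : ℕ, P {ω | X ω = k}
      = ENNReal.ofReal (Real.exp (-(t / n)) * (t / n) ^ k / (Nat.factorial k)))
    (hY : ∀ k : ℕ, P {ω | Y ω = k}
      = ENNReal.ofReal (Real.exp (-(u / n)) * (u / n) ^ k / (Nat.factorial k)))
    (hindep : IndepFun X Y P) :
    P {ω | X ω ≤ Y ω} ≤ ENNReal.ofReal (Real.exp (-(t / n) + 2 * t * u / n ^ 2)) := by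
  have htn : 1 ≤ t / n := (one_le_div hn).mpr ht
  have hun : 0 ≤ u / n := div_nonneg hu hn.le
  calc P {ω | X ω ≤ Y ω} ≤ ∑' k : ℕ, P {ω | X ω ≤ k} * P {ω | Y ω = k} :=
        hindep.measure_setOf_le_le_tsum
    _ ≤ ∑' k : ℕ, ENNReal.ofReal (exp (-(t / n))) * ENNReal.ofReal ((2 * (t / n)) ^ k)
          * P {ω | Y ω = k} :=
        ENNReal.tsum_le_tsum fun k ↦ by gcongr; exact measure_setOf_le_le_of_poisson htn hX k
    _ = ENNReal.ofReal (exp (-(t / n))) * ENNReal.ofReal (exp (u / n * (2 * (t / n) - 1))) := by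
        simp_rw [mul_assoc, hY]
        rw [ENNReal.tsum_mul_left, tsum_ofReal_pow_mul_poisson (by positivity) hun]
    _ ≤ ENNReal.ofReal (exp (-(t / n) + 2 * t * u / n ^ 2)) := by
        rw [← ENNReal.ofReal_mul (exp_nonneg _), ← exp_add]
        gcongr
        have : 2 * t * u / n ^ 2 = u / n * (2 * (t / n)) := by field_simp
        linarith

/-- If `X ~ Poisson(t/n)` and `Y ~ Poisson(u/n)` are independent, with `t ≥ n > 0` and
`u ≥ 0`, then `P(X ≤ Y) ≤ exp(-t/n + 2tu/n²)`. -/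
theorem poisson_le_poisson_bound
    {Ω : Type*} [MeasurableSpace Ω] (P : Measure Ω) [IsProbabilityMeasure P]
    (t u n : ℝ) (hn : 0 < n) (ht : n ≤ t) (hu : 0 ≤ u)
    (X Y : Ω → ℕ)
    (hX : ∀ k : ℕ, P {ω | X ω = k}
      = ENNReal.ofReal (Real.exp (-(t / n)) * (t / n) ^ k / (Nat.factorial k)))
    (hY : ∀ k : ℕ, P {ω | Y ω = k}
      = ENNReal.ofReal (Real.exp (-(u / n)) * (u / n) ^ k / (Nat.factorial k)))
    (hindep : IndepFun X Y P) :
    P {ω | X ω ≤ Y ω} ≤ ENNReal.ofReal (Real.exp (-(t / n) + 2 * t * u / n ^ 2)) :=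
  poisson_le_poisson_bound_general P t u n hn ht hu X Y hX hY hindep
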